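/- Let n ≥ 3, κ ≥ 0, and let λ₁ ≤ ... ≤ λₙ be real numbers with λ₁ + λ₂ > 2κ. Set H = ∑ᵢ λᵢ and G_κ = (∑_{i<j} 1/(λᵢ+λⱼ-2κ))⁻¹. Then (3(n-2)/(n+2))·λ₁ ≥ ((n-1)²(n+2)/4)·G_κ − H + ((n-1)(n+6)/(n+2))·κ. -/
import Mathlib


open Finset

lemma sym_pair_sum {n : ℕ} (F : Fin n → Fin n → ℝ) (hF : ∀ i j, F i j = F j i) :
    2 * ∑ p ∈ univ.filter (fun p : Fin n × Fin n => p.1 < p.2), F p.1 p.2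
      = (∑ i, ∑ j, F i j) - ∑ i, F i i := by
  have hswap : ∑ p ∈ univ.filter (fun p : Fin n × Fin n => p.1 < p.2), F p.1 p.2
      = ∑ p ∈ univ.filter (fun p : Fin n × Fin n => p.2 < p.1), F p.1 p.2 := by
    refine Finset.sum_nbij' (fun p => (p.2, p.1)) (fun p => (p.2, p.1)) ?_ ?_ ?_ ?_ ?_ <;>
      simp +contextual [hF]
  have hdiag : ∑ p ∈ univ.filter (fun p : Fin n × Fin n => p.1 = p.2), F p.1 p.2
      = ∑ i, F i i := by
    refine Finset.sum_nbij' (fun p => p.1) (fun i => (i, i)) ?_ ?_ ?_ ?_ ?_ <;>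
      simp +contextual
  have e1 : univ.filter (fun p : Fin n × Fin n => ¬ p.1 < p.2 ∧ p.2 < p.1)
      = univ.filter (fun p : Fin n × Fin n => p.2 < p.1) := by
    ext p; simp only [mem_filter, mem_univ, true_and, Fin.lt_def]; omega
  have e2 : univ.filter (fun p : Fin n × Fin n => ¬ p.1 < p.2 ∧ ¬ p.2 < p.1)
      = univ.filter (fun p : Fin n × Fin n => p.1 = p.2) := by
    ext p; simp only [mem_filter, mem_univ, true_and, Fin.lt_def, Prod.ext_iff, Fin.ext_iff]
    omega
  have htot : (∑ i, ∑ j, F i j)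
      = (∑ p ∈ univ.filter (fun p : Fin n × Fin n => p.1 < p.2), F p.1 p.2)
      + ((∑ p ∈ univ.filter (fun p : Fin n × Fin n => p.2 < p.1), F p.1 p.2)
      + ∑ p ∈ univ.filter (fun p : Fin n × Fin n => p.1 = p.2), F p.1 p.2) := by
    rw [← Finset.sum_product', Finset.univ_product_univ,
      ← Finset.sum_filter_add_sum_filter_not univ (fun p : Fin n × Fin n => p.1 < p.2)
        (fun p => F p.1 p.2)]
    congr 1
    rw [← Finset.sum_filter_add_sum_filter_not
        (univ.filter (fun p : Fin n × Fin n => ¬ p.1 < p.2)) (fun p => p.2 < p.1)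
        (fun p => F p.1 p.2), Finset.filter_filter, Finset.filter_filter, e1, e2]
  rw [htot, hdiag, ← hswap]; ring


set_option maxHeartbeats 1000000 in
/-- Proposition 3.8 of the paper: for ordered `λ₁ ≤ ⋯ ≤ λₙ` with
`λᵢ + λⱼ > 2κ` for `i < j`, with `H = ∑ λᵢ` and `G_κ = (∑_{i<j} 1/(λᵢ+λⱼ-2κ))⁻¹`,
`(3(n-2)/(n+2))·λ₁ ≥ ((n-1)²(n+2)/4)·G_κ − H + ((n-1)(n+6)/(n+2))·κ`. -/
theorem stmt_1 (n : ℕ) (hn : 3 ≤ n) (κ : ℝ) (hκ : 0 ≤ κ)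
    (lam : Fin n → ℝ) (hmono : Monotone lam)
    (htc : ∀ i j : Fin n, i < j → lam i + lam j > 2 * κ) :
    3 * ((n : ℝ) - 2) / ((n : ℝ) + 2) * lam ⟨0, by omega⟩ ≥
      ((n : ℝ) - 1) ^ 2 * ((n : ℝ) + 2) / 4 *
        (∑ i : Fin n, ∑ j ∈ Finset.univ.filter (fun j => i < j),
          (lam i + lam j - 2 * κ)⁻¹)⁻¹
      - (∑ i, lam i)
      + ((n : ℝ) - 1) * ((n : ℝ) + 6) / ((n : ℝ) + 2) * κ := by
  
  have hN : (3:ℝ) ≤ (n:ℝ) := by exact_mod_cast hn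
  set i0 : Fin n := ⟨0, by omega⟩ with hi0
  set H : ℝ := ∑ i, lam i with hH
  set s : Finset (Fin n × Fin n) := univ.filter (fun p : Fin n × Fin n => p.1 < p.2) with hs
  -- nested sums equal pair sums
  have nested : ∀ F : Fin n → Fin n → ℝ,
      (∑ i : Fin n, ∑ j ∈ Finset.univ.filter (fun j => i < j), F i j)
        = ∑ p ∈ s, F p.1 p.2 := by
    intro F
    simp only [hs, Finset.sum_filter]
    rw [← Finset.sum_product', Finset.univ_product_univ]
  -- sums of "first coordinate = i0" indicators
  have hone : ∀ c : Fin n × Fin n → ℝ,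
      (∑ p ∈ s, (if p.1 = i0 then c p else 0)) = ∑ j ∈ univ.erase i0, c (i0, j) := by
    intro c
    have h0 : (∑ p ∈ s, (if p.1 = i0 then c p else 0))
        = ∑ p ∈ s, (fun i j => if i = i0 then c (i, j) else 0) p.1 p.2 :=
      Finset.sum_congr rfl (fun p _ => rfl)
    rw [h0, ← nested (fun i j => if i = i0 then c (i, j) else 0),
      Finset.sum_eq_single_of_mem i0 (mem_univ _)]
    · have hfe : univ.filter (fun j => i0 < j) = univ.erase i0 := by
        have hv : (i0 : Fin n).val = 0 := rfl
        ext j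
        simp only [mem_filter, mem_univ, true_and, mem_erase, Fin.lt_def, Ne, Fin.ext_iff, hv, and_true]
        omega
      simp [hfe]
    · intro b _ hb; simp [hb]
  have hcard : (∑ p ∈ s, (1:ℝ)) = ((n:ℝ)^2 - (n:ℝ))/2 := by
    have := sym_pair_sum (fun _ _ : Fin n => (1:ℝ)) (fun _ _ => rfl)
    simp only [Finset.sum_const, Finset.card_univ, Fintype.card_fin, nsmul_eq_mul,
      mul_one] at this
    rw [← hs] at this
    rw [Finset.sum_const, nsmul_eq_mul, mul_one]
    nlinarith [this]
  have herase1 : (∑ j ∈ univ.erase i0, (1:ℝ)) = (n:ℝ) - 1 := by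
    rw [Finset.sum_const, Finset.card_erase_of_mem (mem_univ _), Finset.card_univ]
    simp
    push_cast [Nat.cast_sub (by omega : 1 ≤ n)]
    ring
  have heraselam : (∑ j ∈ univ.erase i0, lam j) = H - lam i0 := by
    rw [Finset.sum_erase_eq_sub (mem_univ _)]
  -- positivity
  have hx : ∀ p ∈ s, 0 < lam p.1 + lam p.2 - 2*κ := by
    intro p hp
    have hp' : p.1 < p.2 := by simpa [hs] using hp
    have := htc p.1 p.2 hp'
    linarith
  set f : Fin n × Fin n → ℝ := fun p => if p.1 = i0 then (2:ℝ) else 1 with hf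
  set g : Fin n × Fin n → ℝ := fun p => f p ^ 2 * (lam p.1 + lam p.2 - 2*κ) with hg
  have hfsq : ∀ p, f p ^ 2 = 1 + 3 * (if p.1 = i0 then (1:ℝ) else 0) := by
    intro p; by_cases h : p.1 = i0 <;> simp [hf, h] <;> norm_num
  have hgpos : ∀ p ∈ s, 0 < g p := by
    intro p hp
    have h2 : (0:ℝ) < f p ^ 2 := by by_cases h : p.1 = i0 <;> simp [hf, h] <;> norm_num
    exact mul_pos h2 (hx p hp)
  -- the three sums
  have hA : (∑ p ∈ s, f p) = ((n:ℝ) - 1) * ((n:ℝ) + 2) / 2 := by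
    have hfp : ∀ p : Fin n × Fin n, f p = 1 + (if p.1 = i0 then (1:ℝ) else 0) := by
      intro p; by_cases h : p.1 = i0 <;> simp [hf, h] <;> norm_num
    simp only [hfp, Finset.sum_add_distrib]
    rw [hcard, hone (fun _ => (1:ℝ)), herase1]
    ring
  have hSx : (∑ p ∈ s, (lam p.1 + lam p.2 - 2*κ))
      = ((n:ℝ) - 1) * H - ((n:ℝ)^2 - (n:ℝ)) * κ := by
    have := sym_pair_sum (fun i j : Fin n => lam i + lam j - 2*κ) (fun i j => by ring)
    rw [← hs] at this
    have hinner : ∀ i : Fin n, (∑ j : Fin n, (lam i + lam j - 2*κ))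
        = (n:ℝ) * lam i + H - (n:ℝ) * (2*κ) := by
      intro i
      rw [Finset.sum_sub_distrib, Finset.sum_add_distrib, Finset.sum_const,
        Finset.sum_const, Finset.card_univ, Fintype.card_fin, nsmul_eq_mul, nsmul_eq_mul, ← hH]
    have h2 : (∑ i : Fin n, ∑ j : Fin n, (lam i + lam j - 2*κ))
        = (n:ℝ) * H + (n:ℝ) * H - (n:ℝ) * ((n:ℝ) * (2*κ)) := by
      rw [Finset.sum_congr rfl (fun i _ => hinner i), Finset.sum_sub_distrib,
        Finset.sum_add_distrib, ← Finset.mul_sum, ← hH, Finset.sum_const, Finset.sum_const,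
        Finset.card_univ, Fintype.card_fin, nsmul_eq_mul, nsmul_eq_mul]
    have h3 : (∑ i : Fin n, (lam i + lam i - 2*κ)) = 2 * H - (n:ℝ) * (2*κ) := by
      rw [Finset.sum_sub_distrib, Finset.sum_add_distrib, ← hH, Finset.sum_const,
        Finset.card_univ, Fintype.card_fin, nsmul_eq_mul]
      ring
    rw [h2, h3] at this
    linarith
  have hE : (∑ j ∈ univ.erase i0, (lam i0 + lam j - 2*κ))
      = ((n:ℝ) - 1) * (lam i0 - 2*κ) + (H - lam i0) := by
    have : (∑ j ∈ univ.erase i0, (lam i0 + lam j - 2*κ))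
        = (∑ j ∈ univ.erase i0, ((lam i0 - 2*κ) * 1 + lam j)) := by
      apply Finset.sum_congr rfl; intro j _; ring
    rw [this, Finset.sum_add_distrib, ← Finset.mul_sum, herase1, heraselam]
    ring
  have hT : (∑ p ∈ s, g p)
      = 3 * ((n:ℝ) - 2) * lam i0 + ((n:ℝ) + 2) * H - ((n:ℝ) - 1) * ((n:ℝ) + 6) * κ := by
    have hgp : ∀ p : Fin n × Fin n, g p = (lam p.1 + lam p.2 - 2*κ)
        + 3 * (if p.1 = i0 then (lam p.1 + lam p.2 - 2*κ) else 0) := by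
      intro p; by_cases h : p.1 = i0 <;> simp [hg, hf, h] <;> ring
    simp only [hgp, Finset.sum_add_distrib, ← Finset.mul_sum]
    have hc : (∑ p ∈ s, (if p.1 = i0 then (lam p.1 + lam p.2 - 2*κ) else 0))
        = ∑ j ∈ univ.erase i0, (lam i0 + lam j - 2*κ) := hone _
    rw [hSx, hc, hE]
    ring
  -- Cauchy-Schwarz
  have CS := Finset.sq_sum_div_le_sum_sq_div s f hgpos
  have hratio : (∑ p ∈ s, f p ^ 2 / g p)
      = ∑ p ∈ s, (lam p.1 + lam p.2 - 2*κ)⁻¹ := by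
    apply Finset.sum_congr rfl
    intro p hp
    have h2 : f p ^ 2 ≠ 0 := by by_cases h : p.1 = i0 <;> simp [hf, h]
    rw [hg]
    exact div_mul_cancel_left₀ h2 _
  rw [hratio, hA] at CS
  set S : ℝ := ∑ p ∈ s, (lam p.1 + lam p.2 - 2*κ)⁻¹ with hSdef
  set T : ℝ := ∑ p ∈ s, g p with hTdef
  have hApos : (0:ℝ) < ((n:ℝ) - 1) * ((n:ℝ) + 2) / 2 := by nlinarith
  have hTpos : (0:ℝ) < T := by
    rw [hTdef]
    apply Finset.sum_pos hgpos
    refine ⟨(i0, ⟨1, by omega⟩), ?_⟩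
    rw [hs, Finset.mem_filter]
    exact ⟨Finset.mem_univ _, Fin.mk_lt_mk.mpr (by omega)⟩
  have hSpos : (0:ℝ) < S := by
    have h1 : (0:ℝ) < (((n:ℝ) - 1) * ((n:ℝ) + 2) / 2) ^ 2 / T := by positivity
    linarith
  have hGle : S⁻¹ ≤ T / (((n:ℝ) - 1) * ((n:ℝ) + 2) / 2) ^ 2 := by
    have h0 : (0:ℝ) < (((n:ℝ) - 1) * ((n:ℝ) + 2) / 2) ^ 2 / T := by positivity
    have h1 := inv_anti₀ h0 CS
    rwa [inv_div] at h1
  -- conclude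
  rw [ge_iff_le, nested, ← hSdef]
  clear_value S T H i0
  clear hSx hE hone nested hcard herase1 heraselam hx hgpos hA hratio
  have hkey : ((n:ℝ) - 1) ^ 2 * ((n:ℝ) + 2) / 4 * S⁻¹ ≤ T / ((n:ℝ) + 2) := by
    have h1 : ((n:ℝ) - 1) ^ 2 * ((n:ℝ) + 2) / 4 * S⁻¹
        ≤ ((n:ℝ) - 1) ^ 2 * ((n:ℝ) + 2) / 4 * (T / (((n:ℝ) - 1) * ((n:ℝ) + 2) / 2) ^ 2) :=
      mul_le_mul_of_nonneg_left hGle (by nlinarith)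
    have h2 : ((n:ℝ) - 1) ^ 2 * ((n:ℝ) + 2) / 4 * (T / (((n:ℝ) - 1) * ((n:ℝ) + 2) / 2) ^ 2)
        = T / ((n:ℝ) + 2) := by
      have hne1 : ((n:ℝ) - 1) ≠ 0 := by nlinarith
      have hne2 : ((n:ℝ) + 2) ≠ 0 := by nlinarith
      field_simp
      ring
    linarith
  have hfinal : T / ((n:ℝ) + 2)
      = 3 * ((n:ℝ) - 2) / ((n:ℝ) + 2) * lam i0 + H
        - ((n:ℝ) - 1) * ((n:ℝ) + 6) / ((n:ℝ) + 2) * κ := by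
    rw [hT]
    have hne2 : ((n:ℝ) + 2) ≠ 0 := by nlinarith
    field_simp
  linarith
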